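/- Let G be a finite nonempty r-regular simple graph with r ≥ 1 that is of class two. Then the girth of G equals 3. -/

import Mathlib

open Finset

/-- `C` is a vertex cover of `G`: every edge has an endpoint in `C`. -/
def IsCover {V : Type*} (G : SimpleGraph V) (C : Finset V) : Prop :=
  ∀ ⦃u v : V⦄, G.Adj u v → u ∈ C ∨ v ∈ C

/-- `A` is an independent set of `G`: no two of its vertices are adjacent. -/
def IsIndep {V : Type*} (G : SimpleGraph V) (A : Finset V) : Prop :=
  ∀ ⦃u : V⦄, u ∈ A → ∀ ⦃v : V⦄, v ∈ A → ¬ G.Adj u v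

/-- The vertex cover number β(G): the minimum size of a vertex cover of `G`. -/
noncomputable def coverNumber {V : Type*} [Fintype V] (G : SimpleGraph V) : ℕ :=
  sInf {n : ℕ | ∃ C : Finset V, IsCover G C ∧ C.card = n}

/-- `G` admits a feasible schedule for a boat of capacity `b`, in the sense of the
structure theorem of Csorba, Hurkens and Woeginger. -/
def Feasible {V : Type*} [Fintype V] [DecidableEq V] (G : SimpleGraph V) (b : ℕ) : Prop :=
  ∃ X₁ X₂ X₃ Y₁ Y₂ : Finset V,
    Disjoint X₁ X₂ ∧ Disjoint X₁ X₃ ∧ Disjoint X₂ X₃ ∧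
    IsIndep G (X₁ ∪ X₂ ∪ X₃) ∧
    Y₁.Nonempty ∧ Y₂.Nonempty ∧
    Y₁ ⊆ Finset.univ \ (X₁ ∪ X₂ ∪ X₃) ∧ Y₂ ⊆ Finset.univ \ (X₁ ∪ X₂ ∪ X₃) ∧
    (Finset.univ \ (X₁ ∪ X₂ ∪ X₃)).card ≤ b ∧
    IsIndep G (X₁ ∪ Y₁) ∧ IsIndep G (X₂ ∪ Y₂) ∧
    X₃.card ≤ Y₁.card + Y₂.card

/-- `G` is of class one if it has a feasible schedule for boat capacity β(G). -/
def ClassOne {V : Type*} [Fintype V] [DecidableEq V] (G : SimpleGraph V) : Prop :=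
  Feasible G (coverNumber G)

/-- `G` is of class two if it is not of class one. -/
def ClassTwo {V : Type*} [Fintype V] [DecidableEq V] (G : SimpleGraph V) : Prop :=
  ¬ ClassOne G

/-!
Let `C` be a minimum vertex cover, so that `X = V \ C` is independent, and suppose `G` is
triangle-free. If `C` spans an edge `y₁y₂`, split `X` into the neighbours of `y₁`, which go with
`y₂` (no triangle), and the non-neighbours of `y₁`, which go with `y₁`. Otherwise `G` is bipartite
with sides `X` and `C`; double counting edges in the regular graph gives `|X| ≤ |C|`, so
`X₃ = X`, `Y₁ = Y₂ = C` is a schedule. Either way `G` is of class one.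
-/

open SimpleGraph

lemma girth_eq_three_of_not_cliqueFree_three {V : Type*} {G : SimpleGraph V}
    (h : ¬ G.CliqueFree 3) : G.girth = 3 := by
  have hle : G.egirth ≤ 3 := by
    calc G.egirth ≤ (completeGraph (Fin 3)).egirth :=
          ((not_cliqueFree_iff_top_isContained 3).1 h).egirth_le
      _ = 3 := egirth_top (by simp)
  simp [girth, le_antisymm hle G.three_le_egirth]

section Cover

variable {V : Type*} {G : SimpleGraph V}

lemma exists_isCover_card_eq_coverNumber [Fintype V] (G : SimpleGraph V) :
    ∃ C : Finset V, IsCover G C ∧ C.card = coverNumber G :=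
  Nat.sInf_mem (s := {n | ∃ C : Finset V, IsCover G C ∧ C.card = n})
    ⟨_, univ, fun u _ _ => Or.inl (mem_univ u), rfl⟩

lemma IsCover.nonempty {C : Finset V} (hC : IsCover G C) {u v : V} (huv : G.Adj u v) :
    C.Nonempty :=
  (hC huv).elim (fun hu => ⟨u, hu⟩) (fun hv => ⟨v, hv⟩)

lemma IsCover.isIndep_compl [Fintype V] [DecidableEq V] {C : Finset V} (hC : IsCover G C) :
    IsIndep G (univ \ C) := by
  intro u hu v hv huv
  rw [mem_sdiff] at hu hv
  exact (hC huv).elim hu.2 hv.2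

lemma IsCover.neighborFinset_subset [Fintype V] [DecidableRel G.Adj] {C : Finset V}
    (hC : IsCover G C) {x : V} (hx : x ∉ C) : G.neighborFinset x ⊆ C := fun _ hy =>
  (hC ((mem_neighborFinset G x _).1 hy)).resolve_left hx

end Cover

section Indep

variable {V : Type*} {G : SimpleGraph V}

lemma IsIndep.subset {A B : Finset V} (hB : IsIndep G B) (hAB : A ⊆ B) : IsIndep G A :=
  fun _ hu _ hv => hB (hAB hu) (hAB hv)

lemma IsIndep.union_singleton [DecidableEq V] {A : Finset V} {y : V} (hA : IsIndep G A)
    (hy : ∀ x ∈ A, ¬ G.Adj x y) : IsIndep G (A ∪ {y}) := by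
  intro u hu v hv huv
  simp only [mem_union, mem_singleton] at hu hv
  rcases hu with hu | rfl <;> rcases hv with hv | rfl
  · exact hA hu hv huv
  · exact hy u hu huv
  · exact hy v hv huv.symm
  · exact huv.ne rfl

end Indep

lemma card_le_card_of_neighborFinset_subset {V : Type*} [Fintype V] {G : SimpleGraph V}
    [DecidableRel G.Adj] {r : ℕ} (hr : 0 < r) (hreg : G.IsRegularOfDegree r) {X C : Finset V}
    (hXC : ∀ x ∈ X, G.neighborFinset x ⊆ C) : X.card ≤ C.card := by
  refine Nat.le_of_mul_le_mul_right (card_mul_le_card_mul G.Adj (m := r) (n := r) ?_ ?_) hr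
  · intro x hx
    have : C.bipartiteAbove G.Adj x = G.neighborFinset x := by
      ext y
      simp only [bipartiteAbove, mem_filter, mem_neighborFinset]
      exact ⟨And.right, fun h => ⟨hXC x hx ((mem_neighborFinset G x y).2 h), h⟩⟩
    rw [this, card_neighborFinset_eq_degree, hreg x]
  · intro y _
    calc (X.bipartiteBelow G.Adj y).card ≤ (G.neighborFinset y).card :=
          card_le_card fun x hx => (mem_neighborFinset G y x).2 (mem_filter.1 hx).2.symm
      _ = r := by rw [card_neighborFinset_eq_degree, hreg y]

section Feasible

variable {V : Type*} [Fintype V] [DecidableEq V] {G : SimpleGraph V}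

lemma feasible_of_isCover {C : Finset V} (hC : IsCover G C) (X₁ X₂ X₃ Y₁ Y₂ : Finset V)
    (hX : X₁ ∪ X₂ ∪ X₃ = univ \ C)
    (h₁₂ : Disjoint X₁ X₂) (h₁₃ : Disjoint X₁ X₃) (h₂₃ : Disjoint X₂ X₃)
    (hY₁ : Y₁.Nonempty) (hY₂ : Y₂.Nonempty) (hY₁C : Y₁ ⊆ C) (hY₂C : Y₂ ⊆ C)
    (hi₁ : IsIndep G (X₁ ∪ Y₁)) (hi₂ : IsIndep G (X₂ ∪ Y₂))
    (hcard : X₃.card ≤ Y₁.card + Y₂.card) : Feasible G C.card := by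
  have hY : univ \ (X₁ ∪ X₂ ∪ X₃) = C := by rw [hX, Finset.sdiff_sdiff_eq_self (subset_univ C)]
  refine ⟨X₁, X₂, X₃, Y₁, Y₂, h₁₂, h₁₃, h₂₃, hX ▸ hC.isIndep_compl, hY₁, hY₂,
    hY ▸ hY₁C, hY ▸ hY₂C, hY ▸ le_rfl, hi₁, hi₂, hcard⟩

lemma feasible_of_isCover_of_adj (hG : G.CliqueFree 3) {C : Finset V} (hC : IsCover G C)
    {y₁ y₂ : V} (hy₁ : y₁ ∈ C) (hy₂ : y₂ ∈ C) (hy : G.Adj y₁ y₂) : Feasible G C.card := by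
  classical
  set X := univ \ C
  refine feasible_of_isCover hC (X.filter (G.Adj y₁)) (X.filter (¬ G.Adj y₁ ·)) ∅ {y₂} {y₁}
    (by rw [filter_union_filter_not_eq, union_empty]) (disjoint_filter_filter_not _ _ _)
    (disjoint_empty_right _) (disjoint_empty_right _) (singleton_nonempty _)
    (singleton_nonempty _) (singleton_subset_iff.2 hy₂) (singleton_subset_iff.2 hy₁)
    ?_ ?_ (by simp)
  · refine (hC.isIndep_compl.subset (filter_subset _ _)).union_singleton fun x hx => ?_
    obtain ⟨hxX, hxy⟩ := mem_filter.1 hx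
    exact isIndepSet_neighborSet_of_triangleFree G hG y₁ hxy hy
      (ne_of_mem_of_not_mem hy₂ (mem_sdiff.1 hxX).2).symm
  · refine (hC.isIndep_compl.subset (filter_subset _ _)).union_singleton fun x hx hxy => ?_
    exact (mem_filter.1 hx).2 hxy.symm

lemma feasible_of_isCover_of_isIndep [DecidableRel G.Adj] {r : ℕ} (hr : 0 < r)
    (hreg : G.IsRegularOfDegree r) {C : Finset V} (hC : IsCover G C) (hCindep : IsIndep G C)
    (hCne : C.Nonempty) : Feasible G C.card := by
  have hXC : (univ \ C).card ≤ C.card :=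
    card_le_card_of_neighborFinset_subset hr hreg fun x hx =>
      hC.neighborFinset_subset (mem_sdiff.1 hx).2
  refine feasible_of_isCover hC ∅ ∅ (univ \ C) C C (by simp) (disjoint_empty_left _)
    (disjoint_empty_left _) (disjoint_empty_left _) hCne hCne subset_rfl subset_rfl
    (by simpa using hCindep) (by simpa using hCindep) (by omega)

end Feasible

lemma classOne_of_cliqueFree_three {V : Type*} [Fintype V] [DecidableEq V] [Nonempty V]
    {G : SimpleGraph V} [DecidableRel G.Adj] {r : ℕ} (hr : 0 < r)
    (hreg : G.IsRegularOfDegree r) (hG : G.CliqueFree 3) : ClassOne G := by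
  obtain ⟨C, hC, hCcard⟩ := exists_isCover_card_eq_coverNumber G
  rw [ClassOne, ← hCcard]
  by_cases hCindep : IsIndep G C
  · obtain ⟨v⟩ := ‹Nonempty V›
    obtain ⟨w, hvw⟩ := G.degree_pos_iff_exists_adj v |>.1 (hreg v ▸ hr)
    exact feasible_of_isCover_of_isIndep hr hreg hC hCindep (hC.nonempty hvw)
  · simp only [IsIndep, not_forall, not_not] at hCindep
    obtain ⟨y₁, hy₁, y₂, hy₂, hy⟩ := hCindep
    exact feasible_of_isCover_of_adj hG hC hy₁ hy₂ hy

/-- A finite nonempty regular graph of class two has girth 3. -/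
theorem girth_eq_three_of_regular_classTwo {V : Type*} [Fintype V] [DecidableEq V] [Nonempty V]
    (G : SimpleGraph V) [DecidableRel G.Adj] (r : ℕ) (hr : 1 ≤ r)
    (hreg : G.IsRegularOfDegree r) (h2 : ClassTwo G) :
    G.girth = 3 :=
  girth_eq_three_of_not_cliqueFree_three fun hG => h2 (classOne_of_cliqueFree_three hr hreg hG)
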